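/- Let h be a concave function with derivative h'(z) = φ(F_Z(z)) wherever differentiable, where φ is a non-increasing risk spectrum. Then for each u ∈ (0,1), the infimum in the concave conjugate ĥ(φ(u)) = inf_z (φ(u)·z − h(z)) is attained at z = F_Z^{-1}(u), and consequently ∫₀¹ ĥ(φ(u)) du = SRM_φ(Z) − E[h(Z)]. -/

import Mathlib

/-!
Let `F` be the CDF of `Z` and `q` its quantile function, so that `q u ≤ z ↔ u ≤ F z` for
`0 < u < 1`. Since `φ` is antitone, the derivative `φ (F t)` of `h` is at least `φ u` to the left
of `q u` and at most `φ u` to the right of it, wherever it exists. A concave function is continuous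
and differentiable on a dense set, so these derivative bounds integrate to slope bounds, and they
make `q u` a minimiser of the convex function `z ↦ φ u * z - h z`.

For the integral, `q` pushes Lebesgue measure on `(0, 1)` forward to the law of `Z`, hence
`∫₀¹ h (q u) du = E[h Z]`. Integrability comes from the same slope bounds: `|h'| ≤ max |φ 1| |φ 0|`,
so `h` is Lipschitz.
-/

open MeasureTheory Set Filter ProbabilityTheory

theorem LocallyLipschitz.ae_differentiableAt {E F : Type*} [NormedAddCommGroup E]
    [NormedSpace ℝ E] [FiniteDimensional ℝ E] [MeasurableSpace E] [BorelSpace E]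
    [NormedAddCommGroup F] [NormedSpace ℝ F] [FiniteDimensional ℝ F]
    {μ : Measure E} [μ.IsAddHaarMeasure] {f : E → F} (hf : LocallyLipschitz f) :
    ∀ᵐ x ∂μ, DifferentiableAt ℝ f x := by
  have hball : ∀ n : ℕ, ∀ᵐ x ∂μ, x ∈ Metric.ball (0 : E) n → DifferentiableAt ℝ f x := by
    intro n
    obtain ⟨K, hK⟩ := (hf.locallyLipschitzOn (s := Metric.closedBall (0 : E) n)
      ).exists_lipschitzOnWith_of_compact (isCompact_closedBall 0 n)
    filter_upwards [(hK.mono Metric.ball_subset_closedBall).ae_differentiableWithinAt_of_mem]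
      with x hx hmem
    exact (hx hmem).differentiableAt (Metric.isOpen_ball.mem_nhds hmem)
  filter_upwards [ae_all_iff.2 hball] with x hx
  obtain ⟨n, hn⟩ := exists_nat_gt ‖x‖
  exact hx n (mem_ball_zero_iff.2 hn)

theorem Dense.Icc_subset_closure_Ioo_inter {s : Set ℝ} (hs : Dense s) {a b : ℝ} (hab : a < b) :
    Icc a b ⊆ closure (Ioo a b ∩ s) := by
  rw [← closure_Ioo hab.ne]
  exact closure_minimal (hs.open_subset_closure_inter isOpen_Ioo) isClosed_closure

namespace ConcaveOn

variable {f : ℝ → ℝ} {a b c : ℝ}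

theorem dense_setOf_differentiableAt (hf : ConcaveOn ℝ univ f) :
    Dense {x | DifferentiableAt ℝ f x} :=
  Measure.dense_of_ae (μ := volume)
    (locallyLipschitzOn_univ.1 (hf.locallyLipschitzOn isOpen_univ)).ae_differentiableAt

theorem sub_le_mul_sub_of_deriv_le (hf : ConcaveOn ℝ univ f) (hab : a < b)
    (hc : ∀ t ∈ Ioo a b, DifferentiableAt ℝ f t → deriv f t ≤ c) :
    f b - f a ≤ c * (b - a) := by
  have hcont : Continuous f := continuousOn_univ.1 (hf.continuousOn isOpen_univ)
  refine closure_minimal (s := Ioo a b ∩ {t | DifferentiableAt ℝ f t})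
    (t := {s | f b - f s ≤ c * (b - s)}) ?_ (isClosed_le (by fun_prop) (by fun_prop))
    (hf.dense_setOf_differentiableAt.Icc_subset_closure_Ioo_inter hab (left_mem_Icc.2 hab.le))
  rintro s ⟨hs, hsd⟩
  have hslope := hf.slope_le_deriv (mem_univ s) (mem_univ b) hs.2 hsd
  rw [slope_def_field, div_le_iff₀ (sub_pos.2 hs.2)] at hslope
  exact hslope.trans (mul_le_mul_of_nonneg_right (hc s hs hsd) (sub_pos.2 hs.2).le)

theorem mul_sub_le_sub_of_le_deriv (hf : ConcaveOn ℝ univ f) (hab : a < b)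
    (hc : ∀ t ∈ Ioo a b, DifferentiableAt ℝ f t → c ≤ deriv f t) :
    c * (b - a) ≤ f b - f a := by
  have hcont : Continuous f := continuousOn_univ.1 (hf.continuousOn isOpen_univ)
  refine closure_minimal (s := Ioo a b ∩ {t | DifferentiableAt ℝ f t})
    (t := {s | c * (s - a) ≤ f s - f a}) ?_ (isClosed_le (by fun_prop) (by fun_prop))
    (hf.dense_setOf_differentiableAt.Icc_subset_closure_Ioo_inter hab (right_mem_Icc.2 hab.le))
  rintro s ⟨hs, hsd⟩
  have hslope := hf.deriv_le_slope (mem_univ a) (mem_univ s) hs.1 hsd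
  rw [slope_def_field, le_div_iff₀ (sub_pos.2 hs.1)] at hslope
  exact (mul_le_mul_of_nonneg_right (hc s hs hsd) (sub_pos.2 hs.1).le).trans hslope

theorem isMinOn_mul_sub (hf : ConcaveOn ℝ univ f) {x₀ : ℝ}
    (hleft : ∀ t < x₀, DifferentiableAt ℝ f t → c ≤ deriv f t)
    (hright : ∀ t > x₀, DifferentiableAt ℝ f t → deriv f t ≤ c) :
    IsMinOn (fun x => c * x - f x) univ x₀ := by
  refine isMinOn_univ_iff.2 fun x => ?_
  rcases lt_trichotomy x x₀ with hx | rfl | hx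
  · have := hf.mul_sub_le_sub_of_le_deriv hx fun t ht => hleft t ht.2
    linarith
  · exact le_rfl
  · have := hf.sub_le_mul_sub_of_deriv_le hx fun t ht => hright t ht.1
    linarith

theorem lipschitzWith_of_abs_deriv_le (hf : ConcaveOn ℝ univ f) {K : NNReal}
    (hK : ∀ t, DifferentiableAt ℝ f t → |deriv f t| ≤ K) : LipschitzWith K f := by
  have hle : ∀ x y, x < y → |f y - f x| ≤ K * (y - x) := fun x y hxy => by
    have hlow := hf.mul_sub_le_sub_of_le_deriv (c := -K) hxy fun t _ ht =>
      neg_le_of_abs_le (hK t ht)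
    have hup := hf.sub_le_mul_sub_of_deriv_le hxy fun t _ ht => le_of_abs_le (hK t ht)
    exact abs_le.2 ⟨by linarith, hup⟩
  refine LipschitzWith.of_dist_le_mul fun x y => ?_
  rw [Real.dist_eq, Real.dist_eq]
  rcases lt_trichotomy x y with hxy | rfl | hxy
  · rw [abs_sub_comm, abs_sub_comm x, abs_of_pos (sub_pos.2 hxy)]
    exact hle x y hxy
  · simp
  · rw [abs_of_pos (sub_pos.2 hxy)]
    exact hle y x hxy

end ConcaveOn

theorem LipschitzWith.integrable_comp {α E F : Type*} [MeasurableSpace α] {μ : Measure α}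
    [IsFiniteMeasure μ] [NormedAddCommGroup E] [NormedAddCommGroup F] {K : NNReal} {g : E → F}
    (hg : LipschitzWith K g) {f : α → E} (hf : Integrable f μ) : Integrable (g ∘ f) μ := by
  refine ((integrable_const ‖g 0‖).add (hf.norm.const_mul K)).mono'
    (hg.continuous.comp_aestronglyMeasurable hf.1) (ae_of_all _ fun x => ?_)
  calc ‖g (f x)‖ ≤ ‖g 0‖ + ‖g (f x) - g 0‖ := norm_le_insert' _ _
    _ ≤ ‖g 0‖ + K * ‖f x - 0‖ := by
        gcongr
        simpa only [dist_eq_norm] using hg.dist_le_mul (f x) 0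
    _ = _ := by simp

namespace ProbabilityTheory

-- Outside `(0, 1)` the set may be empty or unbounded below, and `sInf` is then the junk value `0`.
noncomputable def quantile (μ : Measure ℝ) (u : ℝ) : ℝ := sInf {z | u ≤ cdf μ z}

variable (μ : Measure ℝ)

theorem quantile_le_iff {u : ℝ} (hu : u ∈ Ioo 0 1) (z : ℝ) :
    quantile μ u ≤ z ↔ u ≤ cdf μ z := by
  have hne : {z | u ≤ cdf μ z}.Nonempty :=
    ((tendsto_cdf_atTop μ).eventually (eventually_gt_nhds hu.2)).exists.imp fun _ => le_of_lt
  have hbdd : BddBelow {z | u ≤ cdf μ z} := by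
    obtain ⟨z₀, hz₀⟩ := ((tendsto_cdf_atBot μ).eventually (eventually_lt_nhds hu.1)).exists
    refine ⟨z₀, fun z hz => le_of_not_gt fun hlt => ?_⟩
    exact (hz.trans (monotone_cdf μ hlt.le)).not_gt hz₀
  refine ⟨fun hle => ?_, fun hz => csInf_le hbdd hz⟩
  have habove : ∀ x > z, u ≤ cdf μ x := fun x hx => by
    obtain ⟨w, hw, hwx⟩ := (csInf_lt_iff hbdd hne).1 (hle.trans_lt hx)
    exact hw.trans (monotone_cdf μ hwx.le)
  exact ge_of_tendsto (((cdf μ).right_continuous z).mono Ioi_subset_Ici_self)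
    (eventually_nhdsWithin_of_forall habove)

theorem monotoneOn_quantile : MonotoneOn (quantile μ) (Ioo 0 1) :=
  fun _ hu _ hv huv => (quantile_le_iff μ hu _).2 (huv.trans ((quantile_le_iff μ hv _).1 le_rfl))

theorem aemeasurable_quantile : AEMeasurable (quantile μ) (volume.restrict (Ioo 0 1)) :=
  aemeasurable_restrict_of_monotoneOn measurableSet_Ioo (monotoneOn_quantile μ)

variable [IsProbabilityMeasure μ]

theorem map_quantile : (volume.restrict (Ioo 0 1)).map (quantile μ) = μ := by
  have hmeas := aemeasurable_quantile μ
  have : IsProbabilityMeasure (volume.restrict (Ioo (0 : ℝ) 1)) := ⟨by simp⟩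
  have : IsProbabilityMeasure ((volume.restrict (Ioo (0 : ℝ) 1)).map (quantile μ)) :=
    Measure.isProbabilityMeasure_map hmeas
  refine Measure.ext_of_Iic _ _ fun z => ?_
  have hpre : quantile μ ⁻¹' Iic z ∩ Ioo 0 1 = Ioo 0 1 ∩ Iic (cdf μ z) := by
    ext u
    simp only [mem_inter_iff, mem_preimage, mem_Iic]
    exact ⟨fun h => ⟨h.2, (quantile_le_iff μ h.2 z).1 h.1⟩,
      fun h => ⟨(quantile_le_iff μ h.1 z).2 h.2, h.1⟩⟩
  rw [Measure.map_apply_of_aemeasurable hmeas measurableSet_Iic,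
    Measure.restrict_apply' measurableSet_Ioo, hpre, ← ofReal_cdf,
    measure_congr ((Ioo_ae_eq_Ioc (μ := volume) (a := (0 : ℝ)) (b := 1)).inter
      (ae_eq_refl (Iic (cdf μ z)))), Ioc_inter_Iic,
    min_eq_right (cdf_le_one μ z), Real.volume_Ioc, sub_zero]

theorem integrable_comp_quantile {g : ℝ → ℝ} (hg : Integrable g μ) :
    IntegrableOn (fun u => g (quantile μ u)) (Ioo 0 1) := by
  rw [← map_quantile μ] at hg
  exact (integrable_map_measure hg.1 (aemeasurable_quantile μ)).1 hg

theorem integral_comp_quantile {g : ℝ → ℝ} (hg : AEStronglyMeasurable g μ) :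
    ∫ u in Ioo 0 1, g (quantile μ u) = ∫ x, g x ∂μ := by
  rw [← map_quantile μ] at hg
  rw [← integral_map (aemeasurable_quantile μ) hg, map_quantile]

end ProbabilityTheory

theorem stmt16_general {Ω : Type*} [MeasurableSpace Ω] (P : Measure Ω) [IsProbabilityMeasure P]
    (Z : Ω → ℝ) (hZ : Integrable Z P)
    (F : ℝ → ℝ) (hF : ∀ z, F z = (P {ω | Z ω ≤ z}).toReal)
    (q : ℝ → ℝ) (hq : ∀ u, q u = sInf {z | u ≤ F z})
    (φ : ℝ → ℝ)
    (hφanti : AntitoneOn φ (Set.Icc (0:ℝ) 1))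
    (h : ℝ → ℝ) (hconc : ConcaveOn ℝ Set.univ h)
    (hderiv : ∀ z, DifferentiableAt ℝ h z → deriv h z = φ (F z))
    (SRM : ℝ) (hSRM : SRM = ∫ u in Set.Ioc (0:ℝ) 1, q u * φ u) :
    (∀ u ∈ Set.Ioo (0:ℝ) 1, (⨅ z : ℝ, (φ u * z - h z)) = φ u * q u - h (q u))
    ∧ (∫ u in Set.Ioc (0:ℝ) 1, (φ u * q u - h (q u))) = SRM - ∫ ω, h (Z ω) ∂P := by
  set μ := P.map Z
  have : IsProbabilityMeasure μ := Measure.isProbabilityMeasure_map hZ.aemeasurable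
  obtain rfl : F = cdf μ := funext fun z => by
    rw [hF, cdf_eq_real, measureReal_def,
      Measure.map_apply_of_aemeasurable hZ.aemeasurable measurableSet_Iic]
    rfl
  obtain rfl : q = quantile μ := funext hq
  have hcdf (z : ℝ) : cdf μ z ∈ Icc (0 : ℝ) 1 := ⟨cdf_nonneg μ z, cdf_le_one μ z⟩
  have hφbdd {u : ℝ} (hu : u ∈ Icc (0 : ℝ) 1) : |φ u| ≤ max |φ 1| |φ 0| :=
    abs_le_max_abs_abs (hφanti hu (right_mem_Icc.2 zero_le_one) hu.2)
      (hφanti (left_mem_Icc.2 zero_le_one) hu hu.1)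
  have hmin (u : ℝ) (hu : u ∈ Ioo (0 : ℝ) 1) :
      IsMinOn (fun z => φ u * z - h z) univ (quantile μ u) :=
    hconc.isMinOn_mul_sub
      (fun t ht htd => hderiv t htd ▸ hφanti (hcdf t) (Ioo_subset_Icc_self hu)
        (le_of_not_ge fun hge => ht.not_ge ((quantile_le_iff μ hu t).2 hge)))
      (fun t ht htd => hderiv t htd ▸ hφanti (Ioo_subset_Icc_self hu) (hcdf t)
        ((quantile_le_iff μ hu t).1 ht.le))
  have hlip : LipschitzWith ⟨max |φ 1| |φ 0|, by positivity⟩ h :=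
    hconc.lipschitzWith_of_abs_deriv_le fun t ht => hderiv t ht ▸ hφbdd (hcdf t)
  have hid : Integrable id μ :=
    (integrable_map_measure aestronglyMeasurable_id hZ.aemeasurable).2 hZ
  have hh : Integrable h μ := hlip.integrable_comp hid
  have hφq : IntegrableOn (fun u => φ u * quantile μ u) (Ioo 0 1) :=
    (integrable_comp_quantile μ hid).bdd_mul
      (aemeasurable_restrict_of_antitoneOn measurableSet_Ioo
        (hφanti.mono Ioo_subset_Icc_self)).aestronglyMeasurable
      ((ae_restrict_iff' measurableSet_Ioo).2
        (ae_of_all _ fun u hu => hφbdd (Ioo_subset_Icc_self hu)))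
  refine ⟨fun u hu => ciInf_eq_of_forall_ge_of_forall_gt_exists_lt
    (isMinOn_univ_iff.1 (hmin u hu)) fun _ hw => ⟨_, hw⟩, ?_⟩
  rw [hSRM, integral_Ioc_eq_integral_Ioo, integral_Ioc_eq_integral_Ioo,
    integral_sub hφq (integrable_comp_quantile μ hh),
    integral_comp_quantile μ hh.1,
    integral_map hZ.aemeasurable hh.1]
  simp_rw [mul_comm]

/-- Concave conjugate attainment: if h is concave with h'(z) = φ(F_Z(z)) wherever
differentiable (φ a non-increasing non-negative spectrum), then for u ∈ (0,1) the
infimum in ĥ(φ(u)) = inf_z (φ(u)·z − h(z)) is attained at z = F_Z⁻¹(u), and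
∫₀¹ ĥ(φ(u)) du = SRM_φ(Z) − E[h(Z)]. -/
theorem stmt16 {Ω : Type*} [MeasurableSpace Ω] (P : Measure Ω) [IsProbabilityMeasure P]
    (Z : Ω → ℝ) (hZm : Measurable Z) (hZ : Integrable Z P)
    (F : ℝ → ℝ) (hF : ∀ z, F z = (P {ω | Z ω ≤ z}).toReal)
    (q : ℝ → ℝ) (hq : ∀ u, q u = sInf {z | u ≤ F z})
    (φ : ℝ → ℝ)
    (hφpos : ∀ u ∈ Set.Icc (0:ℝ) 1, 0 ≤ φ u)
    (hφanti : AntitoneOn φ (Set.Icc (0:ℝ) 1))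
    (h : ℝ → ℝ) (hconc : ConcaveOn ℝ Set.univ h)
    (hderiv : ∀ z, DifferentiableAt ℝ h z → deriv h z = φ (F z))
    (SRM : ℝ) (hSRM : SRM = ∫ u in Set.Ioc (0:ℝ) 1, q u * φ u) :
    (∀ u ∈ Set.Ioo (0:ℝ) 1, (⨅ z : ℝ, (φ u * z - h z)) = φ u * q u - h (q u))
    ∧ (∫ u in Set.Ioc (0:ℝ) 1, (φ u * q u - h (q u))) = SRM - ∫ ω, h (Z ω) ∂P :=
  stmt16_general P Z hZ F hF q hq φ hφanti h hconc hderiv SRM hSRM
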